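/- Zero-covariance lemma for centered Horvitz–Thompson terms across attributes: if a ≠ a', then Cov(B_{[a]}(r), B_{[a']}(r')) = 0, where B_{[a]}(r) = (n_{[a]} π_{[a]}(r))^{-1} Σ_{i:A_i=a} 1{R_i=r} (Y_i(r) − \bar{Y}_{[a]}(r)). -/

import Mathlib

open Finset MeasureTheory

variable {Ω : Type*} [MeasurableSpace Ω] {n H : ℕ} {𝓡 : Type*} [DecidableEq 𝓡]

/-- Number of units with attribute `a`. -/
def nAttr (A : Fin n → Fin H) (a : Fin H) : ℕ := (univ.filter (fun i => A i = a)).card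

/-- Subgroup average potential outcome `Ȳ_{[a]}(r)`. -/
noncomputable def subMean (A : Fin n → Fin H) (Y : Fin n → 𝓡 → ℝ) (a : Fin H) (r : 𝓡) : ℝ :=
  (nAttr A a : ℝ)⁻¹ * ∑ i ∈ univ.filter (fun i => A i = a), Y i r

/-- Centered Horvitz–Thompson term
`B_{[a]}(r) = (n_{[a]} π_{[a]}(r))⁻¹ Σ_{i:A_i=a} 1{R_i=r} (Y_i(r) − Ȳ_{[a]}(r))`. -/
noncomputable def Bterm (A : Fin n → Fin H) (Y : Fin n → 𝓡 → ℝ) (R : Fin n → Ω → 𝓡)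
    (π : Fin H → 𝓡 → ℝ) (a : Fin H) (r : 𝓡) (ω : Ω) : ℝ :=
  ((nAttr A a : ℝ) * π a r)⁻¹ *
    ∑ i ∈ univ.filter (fun i => A i = a),
      (if R i ω = r then Y i r - subMean A Y a r else 0)

/-- Covariance `Cov(X,Z) = E[XZ] − E[X]E[Z]`. -/
noncomputable def covar (μ : Measure Ω) (X Z : Ω → ℝ) : ℝ :=
  (∫ ω, X ω * Z ω ∂μ) - (∫ ω, X ω ∂μ) * (∫ ω, Z ω ∂μ)

/-! Each `B` term is a Horvitz–Thompson sum `Σ_i 1{R_i = r} c_i` whose weights `c_i` are centred,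
`Σ_i c_i = 0`. Under the symmetry assumption every event `{R_i = r}` with `A_i = a` has the same
probability, so `E[B_{[a]}(r)]` is that probability times `Σ_i c_i = 0`. When `a ≠ a'` the units of
the two groups are distinct, so every pair event `{R_i = r, R_j = r'}` has the same probability
`π_{[a][a']}(r, r')` and `E[B_{[a]}(r) B_{[a']}(r')]` is that probability times
`(Σ_i c_i)(Σ_j c'_j) = 0`. -/

theorem Finset.sum_sub_inv_card_mul_sum {ι K : Type*} [Field K] [CharZero K] (s : Finset ι)
    (f : ι → K) : ∑ i ∈ s, (f i - (#s : K)⁻¹ * ∑ j ∈ s, f j) = 0 := by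
  rcases s.eq_empty_or_nonempty with rfl | hs
  · simp
  · rw [sum_sub_distrib, sum_const, nsmul_eq_mul, mul_inv_cancel_left₀ (by simpa using hs.ne_empty),
      sub_self]

theorem sum_sub_subMean {T : Type*} (A : Fin n → Fin H) (Y : Fin n → T → ℝ) (a : Fin H) (r : T) :
    ∑ i ∈ univ.filter (fun i => A i = a), (Y i r - subMean A Y a r) = 0 :=
  Finset.sum_sub_inv_card_mul_sum _ _

section HorvitzThompson

variable {α ι κ : Type*}

theorem sum_indicator_mul_sum_indicator (s : Finset ι) (t : Finset κ) (E : ι → Set α)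
    (F : κ → Set α) (c : ι → ℝ) (d : κ → ℝ) (x : α) :
    (∑ i ∈ s, (E i).indicator (fun _ => c i) x) * ∑ j ∈ t, (F j).indicator (fun _ => d j) x =
      ∑ p ∈ s ×ˢ t, (E p.1 ∩ F p.2).indicator (fun _ => c p.1 * d p.2) x := by
  rw [sum_mul_sum, sum_product]
  simp only [Set.inter_indicator_mul]

variable [MeasurableSpace α] {μ : Measure α} [IsFiniteMeasure μ]

theorem integral_sum_indicator_const_of_measureReal_eq (s : Finset ι) (E : ι → Set α)
    (hE : ∀ i ∈ s, MeasurableSet (E i)) (c : ι → ℝ) (p : ℝ) (hp : ∀ i ∈ s, μ.real (E i) = p) :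
    ∫ x, ∑ i ∈ s, (E i).indicator (fun _ => c i) x ∂μ = p * ∑ i ∈ s, c i := by
  rw [integral_finsetSum s fun i hi => (integrable_const (c i)).indicator (hE i hi), mul_sum]
  refine sum_congr rfl fun i hi => ?_
  rw [integral_indicator_const _ (hE i hi), hp i hi, smul_eq_mul]

theorem integral_sum_indicator_mul_sum_indicator_of_measureReal_eq (s : Finset ι) (t : Finset κ)
    (E : ι → Set α) (F : κ → Set α) (hE : ∀ i ∈ s, MeasurableSet (E i))
    (hF : ∀ j ∈ t, MeasurableSet (F j)) (c : ι → ℝ) (d : κ → ℝ) (q : ℝ)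
    (hq : ∀ i ∈ s, ∀ j ∈ t, μ.real (E i ∩ F j) = q) :
    ∫ x, (∑ i ∈ s, (E i).indicator (fun _ => c i) x) *
        ∑ j ∈ t, (F j).indicator (fun _ => d j) x ∂μ =
      q * ((∑ i ∈ s, c i) * ∑ j ∈ t, d j) := by
  simp_rw [sum_indicator_mul_sum_indicator, sum_mul_sum, ← sum_product' (f := fun i j => c i * d j)]
  exact integral_sum_indicator_const_of_measureReal_eq _ _
    (fun x hx => (hE _ (mem_product.1 hx).1).inter (hF _ (mem_product.1 hx).2)) _ q
    fun x hx => hq _ (mem_product.1 hx).1 _ (mem_product.1 hx).2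

end HorvitzThompson

theorem Bterm_eq_mul_sum_indicator {α : Type*} (A : Fin n → Fin H) (Y : Fin n → 𝓡 → ℝ)
    (R : Fin n → α → 𝓡) (π : Fin H → 𝓡 → ℝ) (a : Fin H) (r : 𝓡) (x : α) :
    Bterm A Y R π a r x = ((nAttr A a : ℝ) * π a r)⁻¹ *
      ∑ i ∈ univ.filter (fun i => A i = a),
        {x | R i x = r}.indicator (fun _ => Y i r - subMean A Y a r) x := by
  simp only [Bterm, Set.indicator_apply, Set.mem_ofPred_eq]

theorem integral_Bterm_eq_zero (μ : Measure Ω) [IsFiniteMeasure μ]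
    (A : Fin n → Fin H) (Y : Fin n → 𝓡 → ℝ) (R : Fin n → Ω → 𝓡)
    (hmeas : ∀ (i : Fin n) (t : 𝓡), MeasurableSet {ω | R i ω = t}) (π : Fin H → 𝓡 → ℝ)
    (hmarg : ∀ (i : Fin n) (t : 𝓡), μ.real {ω | R i ω = t} = π (A i) t) (a : Fin H) (r : 𝓡) :
    ∫ ω, Bterm A Y R π a r ω ∂μ = 0 := by
  simp_rw [Bterm_eq_mul_sum_indicator]
  rw [integral_const_mul, integral_sum_indicator_const_of_measureReal_eq _ _ (fun i _ => hmeas i r)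
    _ (π a r) fun i hi => by rw [hmarg, (mem_filter.1 hi).2], sum_sub_subMean,
    mul_zero, mul_zero]

theorem integral_Bterm_mul_Bterm_eq_zero (μ : Measure Ω) [IsFiniteMeasure μ]
    (A : Fin n → Fin H) (Y : Fin n → 𝓡 → ℝ) (R : Fin n → Ω → 𝓡)
    (hmeas : ∀ (i : Fin n) (t : 𝓡), MeasurableSet {ω | R i ω = t}) (π : Fin H → 𝓡 → ℝ)
    (π2 : Fin H → Fin H → 𝓡 → 𝓡 → ℝ)
    (hjoint : ∀ (i j : Fin n), i ≠ j → ∀ (t t' : 𝓡),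
      μ.real {ω | R i ω = t ∧ R j ω = t'} = π2 (A i) (A j) t t')
    {a a' : Fin H} (haa : a ≠ a') (r r' : 𝓡) :
    ∫ ω, Bterm A Y R π a r ω * Bterm A Y R π a' r' ω ∂μ = 0 := by
  have hpair : ∀ i ∈ univ.filter (fun i => A i = a), ∀ j ∈ univ.filter (fun i => A i = a'),
      μ.real ({ω | R i ω = r} ∩ {ω | R j ω = r'}) = π2 a a' r r' := by
    intro i hi j hj
    rw [mem_filter] at hi hj
    have hij : i ≠ j := fun h => haa (hi.2 ▸ hj.2 ▸ congrArg A h)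
    rw [← Set.ofPred_and, hjoint i j hij, hi.2, hj.2]
  simp_rw [Bterm_eq_mul_sum_indicator, mul_mul_mul_comm]
  rw [integral_const_mul, integral_sum_indicator_mul_sum_indicator_of_measureReal_eq _ _ _ _
    (fun i _ => hmeas i r) (fun j _ => hmeas j r') _ _ _ hpair, sum_sub_subMean,
    zero_mul, mul_zero, mul_zero]

theorem cov_Bterms_cross_attr_zero_general
    (μ : Measure Ω) [IsProbabilityMeasure μ]
    (A : Fin n → Fin H) (Y : Fin n → 𝓡 → ℝ) (R : Fin n → Ω → 𝓡)
    (hmeas : ∀ (i : Fin n) (t : 𝓡), MeasurableSet {ω | R i ω = t})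
    (π : Fin H → 𝓡 → ℝ)
    (π2 : Fin H → Fin H → 𝓡 → 𝓡 → ℝ)
    (hmarg : ∀ (i : Fin n) (t : 𝓡), (μ {ω | R i ω = t}).toReal = π (A i) t)
    (hjoint : ∀ (i j : Fin n), i ≠ j → ∀ (t t' : 𝓡),
      (μ {ω | R i ω = t ∧ R j ω = t'}).toReal = π2 (A i) (A j) t t')
    (a a' : Fin H) (haa : a ≠ a') (r r' : 𝓡) :
    covar μ (Bterm A Y R π a r) (Bterm A Y R π a' r') = 0 := by
  rw [covar, integral_Bterm_mul_Bterm_eq_zero μ A Y R hmeas π π2 hjoint haa,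
    integral_Bterm_eq_zero μ A Y R hmeas π hmarg, zero_mul, sub_zero]

/-- Zero covariance across attributes of the centered Horvitz–Thompson terms:
under the symmetry assumption (marginal probabilities depend only on the
attribute, joint probabilities for distinct units depend only on the pair of
attributes), if `a ≠ a'` then `Cov(B_{[a]}(r), B_{[a']}(r')) = 0`. -/
theorem cov_Bterms_cross_attr_zero
    (μ : Measure Ω) [IsProbabilityMeasure μ]
    (A : Fin n → Fin H) (Y : Fin n → 𝓡 → ℝ) (R : Fin n → Ω → 𝓡)
    (hmeas : ∀ (i : Fin n) (t : 𝓡), MeasurableSet {ω | R i ω = t})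
    (π : Fin H → 𝓡 → ℝ) (hπ : ∀ a t, 0 < π a t)
    (π2 : Fin H → Fin H → 𝓡 → 𝓡 → ℝ)
    (hmarg : ∀ (i : Fin n) (t : 𝓡), (μ {ω | R i ω = t}).toReal = π (A i) t)
    (hjoint : ∀ (i j : Fin n), i ≠ j → ∀ (t t' : 𝓡),
      (μ {ω | R i ω = t ∧ R j ω = t'}).toReal = π2 (A i) (A j) t t')
    (a a' : Fin H) (haa : a ≠ a') (r r' : 𝓡) :
    covar μ (Bterm A Y R π a r) (Bterm A Y R π a' r') = 0 :=
  cov_Bterms_cross_attr_zero_general μ A Y R hmeas π π2 hmarg hjoint a a' haa r r'
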